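/- Let (E, b, T, P) be an (n+1)-dimensional Poincaré pair, and define T₀ = Tb* + (-1)^p bT on E_p. Then: (1) T₀* = (-1)^{(n-p)p}T₀: E_p → E_{n-p}; (2) T₀ = PT₀ = T₀P; (3) T₀b* + (-1)^p bT₀ = 0 on PE_p; hence (PE, Pb, T₀) satisfies the algebraic identities of an n-dimensional Poincaré complex (the 'boundary' of the pair). -/
import Mathlib


/-!
Statement 12: Let `(E, b, T, P)` be an `(n+1)`-dimensional Poincaré pair and define
`T₀ = Tb* + (-1)^p bT` on `E_p`.  Then:
(1) `T₀* = (-1)^{(n-p)p} T₀ : E_p → E_{n-p}`;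
(2) `T₀ = P T₀ = T₀ P`;
(3) `T₀ b* + (-1)^p b T₀ = 0` on `P E_p`;
hence `(PE, Pb, T₀)` satisfies the algebraic identities of an `n`-dimensional Poincaré
complex (the boundary of the pair).

The pair is modelled on an ambient Hilbert space with grading projections `Pr p`
(degrees `0, …, n`), differential `b`, duality operator `T` of degree `n+1`, and the
orthogonal projection `Q` (the `P` of the pair) onto the boundary subcomplex.
-/

noncomputable section

open ContinuousLinearMap

/-- A flat model of an `(n+1)`-dimensional Hilbert–Poincaré pair. -/
structure HilbertPoincarePair (n : ℕ) (H : Type*) [NormedAddCommGroup H]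
    [InnerProductSpace ℂ H] [CompleteSpace H] where
  Pr : ℕ → H →L[ℂ] H
  b : H →L[ℂ] H
  T : H →L[ℂ] H
  Q : H →L[ℂ] H
  Pr_selfAdjoint : ∀ p, IsSelfAdjoint (Pr p)
  Pr_idem : ∀ p, Pr p ∘L Pr p = Pr p
  Pr_orth : ∀ p q, p ≠ q → Pr p ∘L Pr q = 0
  Pr_bounded : ∀ p, n < p → Pr p = 0
  Pr_total : ∑ p ∈ Finset.range (n + 1), Pr p = ContinuousLinearMap.id ℂ H
  b_deg : ∀ p, b ∘L Pr (p + 1) = Pr p ∘L (b ∘L Pr (p + 1))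
  b_bot : b ∘L Pr 0 = 0
  b_sq : b ∘L b = 0
  Q_selfAdjoint : IsSelfAdjoint Q
  Q_idem : Q ∘L Q = Q
  Q_graded : ∀ p, Q ∘L Pr p = Pr p ∘L Q
  -- P determines a subcomplex: PbP = bP
  subcomplex : (Q ∘L b) ∘L Q = b ∘L Q
  -- T has degree n+1
  T_deg : ∀ p, p ≤ n → T ∘L Pr p = Pr (n + 1 - p) ∘L (T ∘L Pr p)
  -- T* = (-1)^{(n+1-p)p} T on E_p
  T_adjoint : ∀ p, p ≤ n →
    (ContinuousLinearMap.adjoint T) ∘L Pr p = ((-1 : ℂ) ^ ((n + 1 - p) * p)) • (T ∘L Pr p)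
  -- the range of Tb* + (-1)^p bT : E_p → E_{n-p} is contained in the range of P
  range_in_Q : ∀ p, p ≤ n →
    Q ∘L (((T ∘L ContinuousLinearMap.adjoint b) + ((-1 : ℂ) ^ p) • (b ∘L T)) ∘L Pr p)
      = ((T ∘L ContinuousLinearMap.adjoint b) + ((-1 : ℂ) ^ p) • (b ∘L T)) ∘L Pr p
  -- P^⊥ T is a chain homotopy equivalence from (E, b*) to (P^⊥E, P^⊥b)
  Qperp_T_equiv : ∃ V h₁ h₂ : H →L[ℂ] H,
    ((1 - Q) ∘L T) ∘L V - (1 - Q) =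
      (((1 - Q) ∘L b)) ∘L h₁ + h₁ ∘L ((1 - Q) ∘L b) ∧
    V ∘L ((1 - Q) ∘L T) - 1 =
      (ContinuousLinearMap.adjoint b) ∘L h₂ + h₂ ∘L (ContinuousLinearMap.adjoint b)

/-- The boundary duality operator `T₀ = Tb* + (-1)^p bT` of a Poincaré pair. -/
def boundaryT {n : ℕ} {H : Type*} [NormedAddCommGroup H] [InnerProductSpace ℂ H]
    [CompleteSpace H] (Pair : HilbertPoincarePair n H) : H →L[ℂ] H :=
  ∑ p ∈ Finset.range (n + 1),
    ((Pair.T ∘L ContinuousLinearMap.adjoint Pair.b)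
      + ((-1 : ℂ) ^ p) • (Pair.b ∘L Pair.T)) ∘L Pair.Pr p

namespace HilbertPoincarePairAux

variable {n : ℕ} {H : Type*} [NormedAddCommGroup H] [InnerProductSpace ℂ H]
  [CompleteSpace H] (Pair : HilbertPoincarePair n H)

/-- The degree-`p` piece of the boundary operator. -/
def S (p : ℕ) : H →L[ℂ] H :=
  (Pair.T ∘L ContinuousLinearMap.adjoint Pair.b) + ((-1 : ℂ) ^ p) • (Pair.b ∘L Pair.T)

lemma boundaryT_eq : boundaryT Pair = ∑ p ∈ Finset.range (n + 1), S Pair p ∘L Pair.Pr p := rfl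

lemma Pr_apply_Pr (p q : ℕ) (x : H) :
    Pair.Pr p (Pair.Pr q x) = if p = q then Pair.Pr p x else 0 := by
  by_cases h : p = q
  · subst h
    rw [if_pos rfl]
    have := DFunLike.congr_fun (Pair.Pr_idem p) x
    simpa using this
  · rw [if_neg h]
    have := DFunLike.congr_fun (Pair.Pr_orth p q h) x
    simpa using this

lemma pPr_top (x : H) : Pair.Pr (n + 1) x = 0 := by
  rw [Pair.Pr_bounded (n + 1) (by omega)]
  rfl

lemma Pr_comp_b (p : ℕ) : Pair.Pr p ∘L Pair.b = Pair.b ∘L Pair.Pr (p + 1) := by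
  have hb : Pair.b = ∑ q ∈ Finset.range (n + 1), Pair.b ∘L Pair.Pr q := by
    conv_lhs => rw [← ContinuousLinearMap.comp_id Pair.b, ← Pair.Pr_total,
      ContinuousLinearMap.comp_finset_sum]
  have key : ∀ q, Pair.Pr p ∘L (Pair.b ∘L Pair.Pr q)
      = if q = p + 1 then Pair.b ∘L Pair.Pr (p + 1) else 0 := by
    intro q
    match q with
    | 0 =>
      rw [Pair.b_bot, ContinuousLinearMap.comp_zero, if_neg (by omega)]
    | r + 1 =>
      rw [Pair.b_deg r, ← ContinuousLinearMap.comp_assoc]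
      by_cases h : r = p
      · subst h
        rw [Pair.Pr_idem, ← Pair.b_deg, if_pos rfl]
      · rw [Pair.Pr_orth p r (fun hh => h hh.symm), ContinuousLinearMap.zero_comp,
          if_neg (by omega)]
  conv_lhs => rw [hb]
  rw [ContinuousLinearMap.comp_finset_sum]
  simp only [key]
  rw [Finset.sum_ite_eq' (Finset.range (n + 1)) (p + 1)
    (fun _ => Pair.b ∘L Pair.Pr (p + 1))]
  by_cases hp : p + 1 ∈ Finset.range (n + 1)
  · rw [if_pos hp]
  · rw [if_neg hp, Pair.Pr_bounded (p + 1) (by simp [Finset.mem_range] at hp; omega),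
      ContinuousLinearMap.comp_zero]

lemma adjb_Pr (p : ℕ) :
    ContinuousLinearMap.adjoint Pair.b ∘L Pair.Pr p
      = Pair.Pr (p + 1) ∘L ContinuousLinearMap.adjoint Pair.b := by
  have h := congrArg ContinuousLinearMap.adjoint (Pr_comp_b Pair p)
  rwa [ContinuousLinearMap.adjoint_comp, ContinuousLinearMap.adjoint_comp,
    (Pair.Pr_selfAdjoint p).adjoint_eq, (Pair.Pr_selfAdjoint (p + 1)).adjoint_eq] at h

/-- pointwise base facts -/
lemma pb (p : ℕ) (x : H) : Pair.Pr p (Pair.b x) = Pair.b (Pair.Pr (p + 1) x) := by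
  have := DFunLike.congr_fun (Pr_comp_b Pair p) x
  simpa using this

lemma pb' (p : ℕ) (x : H) :
    ContinuousLinearMap.adjoint Pair.b (Pair.Pr p x)
      = Pair.Pr (p + 1) (ContinuousLinearMap.adjoint Pair.b x) := by
  have := DFunLike.congr_fun (adjb_Pr Pair p) x
  simpa using this

lemma pT (p : ℕ) (hp : p ≤ n) (x : H) :
    Pair.T (Pair.Pr p x) = Pair.Pr (n + 1 - p) (Pair.T (Pair.Pr p x)) := by
  have := DFunLike.congr_fun (Pair.T_deg p hp) x
  simpa using this

lemma pT' (p : ℕ) (hp : p ≤ n) (x : H) :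
    ContinuousLinearMap.adjoint Pair.T (Pair.Pr p x)
      = ((-1 : ℂ) ^ ((n + 1 - p) * p)) • Pair.T (Pair.Pr p x) := by
  have := DFunLike.congr_fun (Pair.T_adjoint p hp) x
  simpa using this

lemma pbb (x : H) : Pair.b (Pair.b x) = 0 := by
  have := DFunLike.congr_fun Pair.b_sq x
  simpa using this

lemma pbb' (x : H) :
    ContinuousLinearMap.adjoint Pair.b (ContinuousLinearMap.adjoint Pair.b x) = 0 := by
  have h := congrArg ContinuousLinearMap.adjoint Pair.b_sq
  rw [ContinuousLinearMap.adjoint_comp] at h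
  have := DFunLike.congr_fun h x
  simpa using this

/-- degree of `bT` -/
lemma deg_bT (p : ℕ) (hp : p ≤ n) (x : H) :
    Pair.b (Pair.T (Pair.Pr p x)) = Pair.Pr (n - p) (Pair.b (Pair.T (Pair.Pr p x))) := by
  have h1 : n + 1 - p = (n - p) + 1 := by omega
  calc Pair.b (Pair.T (Pair.Pr p x))
      = Pair.b (Pair.Pr ((n - p) + 1) (Pair.T (Pair.Pr p x))) := by
        rw [← h1, ← pT Pair p hp]
    _ = Pair.Pr (n - p) (Pair.b (Pair.T (Pair.Pr p x))) := (pb Pair (n - p) _).symm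

/-- degree of `Tb*` -/
lemma deg_Tb (p : ℕ) (hp : p ≤ n) (x : H) :
    Pair.T (ContinuousLinearMap.adjoint Pair.b (Pair.Pr p x))
      = Pair.Pr (n - p) (Pair.T (ContinuousLinearMap.adjoint Pair.b (Pair.Pr p x))) := by
  rcases lt_or_eq_of_le hp with h | h
  · have hp1 : p + 1 ≤ n := h
    calc Pair.T (ContinuousLinearMap.adjoint Pair.b (Pair.Pr p x))
        = Pair.T (Pair.Pr (p + 1) (ContinuousLinearMap.adjoint Pair.b x)) := by
          rw [pb']
      _ = Pair.Pr (n + 1 - (p + 1))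
            (Pair.T (Pair.Pr (p + 1) (ContinuousLinearMap.adjoint Pair.b x))) :=
          pT Pair (p + 1) hp1 _
      _ = Pair.Pr (n - p)
            (Pair.T (ContinuousLinearMap.adjoint Pair.b (Pair.Pr p x))) := by
          rw [show n + 1 - (p + 1) = n - p from by omega, ← pb']
  · subst h
    rw [pb', pPr_top]
    simp

lemma adjprop_bT (p : ℕ) (hp : p ≤ n) (x : H) :
    Pair.b (ContinuousLinearMap.adjoint Pair.T (Pair.Pr p x))
      = ((-1 : ℂ) ^ ((n + 1 - p) * p)) • Pair.b (Pair.T (Pair.Pr p x)) := by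
  rw [pT' Pair p hp, map_smul]

lemma adjprop_Tb (p : ℕ) (hp : p ≤ n) (x : H) :
    ContinuousLinearMap.adjoint Pair.T (ContinuousLinearMap.adjoint Pair.b (Pair.Pr p x))
      = ((-1 : ℂ) ^ ((n - p) * (p + 1)))
          • Pair.T (ContinuousLinearMap.adjoint Pair.b (Pair.Pr p x)) := by
  rcases lt_or_eq_of_le hp with h | h
  · have hp1 : p + 1 ≤ n := h
    rw [pb', pT' Pair (p + 1) hp1, show n + 1 - (p + 1) = n - p from by omega, ← pb']
  · subst h
    rw [pb', pPr_top]
    simp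

/-- the adjoint of the degree-`q` piece -/
lemma adjoint_S (q : ℕ) :
    ContinuousLinearMap.adjoint (S Pair q)
      = (Pair.b ∘L ContinuousLinearMap.adjoint Pair.T)
        + ((-1 : ℂ) ^ q) • (ContinuousLinearMap.adjoint Pair.T
            ∘L ContinuousLinearMap.adjoint Pair.b) := by
  rw [show ContinuousLinearMap.adjoint (S Pair q) = star (S Pair q) from rfl]
  unfold S
  rw [star_add, star_smul]
  congr 1
  · rw [show (star (Pair.T ∘L ContinuousLinearMap.adjoint Pair.b) : H →L[ℂ] H)
        = ContinuousLinearMap.adjoint (Pair.T ∘L ContinuousLinearMap.adjoint Pair.b)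
        from rfl,
      ContinuousLinearMap.adjoint_comp, ContinuousLinearMap.adjoint_adjoint]
  · rw [show (star (Pair.b ∘L Pair.T) : H →L[ℂ] H)
        = ContinuousLinearMap.adjoint (Pair.b ∘L Pair.T) from rfl,
      ContinuousLinearMap.adjoint_comp]
    congr 1
    simp

lemma boundaryT_Pr (p : ℕ) (hp : p ≤ n) :
    boundaryT Pair ∘L Pair.Pr p = S Pair p ∘L Pair.Pr p := by
  rw [boundaryT_eq, ContinuousLinearMap.finset_sum_comp]
  rw [Finset.sum_eq_single_of_mem p (Finset.mem_range.mpr (by omega))]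
  · rw [ContinuousLinearMap.comp_assoc, Pair.Pr_idem]
  · intro q _ hq
    rw [ContinuousLinearMap.comp_assoc, Pair.Pr_orth q p hq,
      ContinuousLinearMap.comp_zero]

lemma pT0 (p : ℕ) (hp : p ≤ n) (x : H) :
    boundaryT Pair (Pair.Pr p x)
      = Pair.T (ContinuousLinearMap.adjoint Pair.b (Pair.Pr p x))
        + ((-1 : ℂ) ^ p) • Pair.b (Pair.T (Pair.Pr p x)) := by
  have := DFunLike.congr_fun (boundaryT_Pr Pair p hp) x
  simpa [S] using this

lemma adj_boundaryT_apply (p : ℕ) (hp : p ≤ n) (x : H) :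
    ContinuousLinearMap.adjoint (boundaryT Pair) (Pair.Pr p x)
      = ((-1 : ℂ) ^ ((n + 1 - p) * p)) • Pair.b (Pair.T (Pair.Pr p x))
        + ((-1 : ℂ) ^ (n - p) * (-1 : ℂ) ^ ((n - p) * (p + 1)))
            • Pair.T (ContinuousLinearMap.adjoint Pair.b (Pair.Pr p x)) := by
  set A := Pair.b (Pair.T (Pair.Pr p x)) with hA_def
  set B := Pair.T (ContinuousLinearMap.adjoint Pair.b (Pair.Pr p x)) with hB_def
  have hA : A = Pair.Pr (n - p) A := deg_bT Pair p hp x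
  have hB : B = Pair.Pr (n - p) B := deg_Tb Pair p hp x
  have hadj : ContinuousLinearMap.adjoint (boundaryT Pair)
      = ∑ q ∈ Finset.range (n + 1),
          Pair.Pr q ∘L ContinuousLinearMap.adjoint (S Pair q) := by
    rw [boundaryT_eq,
      show ContinuousLinearMap.adjoint (∑ q ∈ Finset.range (n + 1), S Pair q ∘L Pair.Pr q)
        = star (∑ q ∈ Finset.range (n + 1), S Pair q ∘L Pair.Pr q) from rfl,
      star_sum]
    refine Finset.sum_congr rfl fun q _ => ?_
    rw [show (star (S Pair q ∘L Pair.Pr q) : H →L[ℂ] H)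
        = ContinuousLinearMap.adjoint (S Pair q ∘L Pair.Pr q) from rfl,
      ContinuousLinearMap.adjoint_comp, (Pair.Pr_selfAdjoint q).adjoint_eq]
  rw [hadj, ContinuousLinearMap.sum_apply]
  have hqA : ∀ q, Pair.Pr q A = if q = n - p then A else 0 := by
    intro q
    conv_lhs => rw [hA]
    rw [Pr_apply_Pr]
    by_cases h : q = n - p
    · subst h
      rw [if_pos rfl, if_pos rfl, ← hA]
    · rw [if_neg h, if_neg h]
  have hqB : ∀ q, Pair.Pr q B = if q = n - p then B else 0 := by
    intro q
    conv_lhs => rw [hB]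
    rw [Pr_apply_Pr]
    by_cases h : q = n - p
    · subst h
      rw [if_pos rfl, if_pos rfl, ← hB]
    · rw [if_neg h, if_neg h]
  have hterm : ∀ q, (Pair.Pr q ∘L ContinuousLinearMap.adjoint (S Pair q)) (Pair.Pr p x)
      = if q = n - p
        then ((-1 : ℂ) ^ ((n + 1 - p) * p)) • A
          + ((-1 : ℂ) ^ q * (-1 : ℂ) ^ ((n - p) * (p + 1))) • B
        else 0 := by
    intro q
    rw [ContinuousLinearMap.comp_apply, adjoint_S]
    simp only [ContinuousLinearMap.add_apply, ContinuousLinearMap.smul_apply,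
      ContinuousLinearMap.comp_apply]
    rw [adjprop_bT Pair p hp, adjprop_Tb Pair p hp, smul_smul, map_add, map_smul, map_smul,
      ← hA_def, ← hB_def, hqA, hqB]
    by_cases h : q = n - p
    · rw [if_pos h, if_pos h, if_pos h]
    · rw [if_neg h, if_neg h, if_neg h, smul_zero, smul_zero, add_zero]
  simp only [hterm]
  rw [Finset.sum_ite_eq' (Finset.range (n + 1)) (n - p)]
  rw [if_pos (Finset.mem_range.mpr (by omega))]

/-- Part (1). -/
lemma part1 (p : ℕ) (hp : p ≤ n) :
    ContinuousLinearMap.adjoint (boundaryT Pair) ∘L Pair.Pr p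
      = ((-1 : ℂ) ^ ((n - p) * p)) • (boundaryT Pair ∘L Pair.Pr p) := by
  have sign1 : ((-1 : ℂ)) ^ ((n + 1 - p) * p) = (-1 : ℂ) ^ ((n - p) * p) * (-1 : ℂ) ^ p := by
    rw [← pow_add]
    congr 1
    have h : n + 1 - p = (n - p) + 1 := by omega
    rw [h]
    ring
  have sign2 : ((-1 : ℂ)) ^ (n - p) * (-1 : ℂ) ^ ((n - p) * (p + 1))
      = (-1 : ℂ) ^ ((n - p) * p) := by
    rw [← pow_add]
    have h : (n - p) + (n - p) * (p + 1) = (n - p) * p + 2 * (n - p) := by ring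
    have h2 : ((-1 : ℂ)) ^ (2 * (n - p)) = 1 := by
      rw [pow_mul, neg_one_sq, one_pow]
    rw [h, pow_add, h2, mul_one]
  ext x
  simp only [ContinuousLinearMap.comp_apply, ContinuousLinearMap.smul_apply]
  rw [adj_boundaryT_apply Pair p hp x, pT0 Pair p hp x, sign1, sign2, smul_add, smul_smul]
  rw [add_comm]

/-- Part (2), first half. -/
lemma part2a : Pair.Q ∘L boundaryT Pair = boundaryT Pair := by
  unfold boundaryT
  rw [ContinuousLinearMap.comp_finset_sum]
  exact Finset.sum_congr rfl fun p hp =>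
    Pair.range_in_Q p (by have := Finset.mem_range.mp hp; omega)

/-- Part (2), second half. -/
lemma part2b : boundaryT Pair ∘L Pair.Q = boundaryT Pair := by
  have h1 : Pair.Q ∘L ContinuousLinearMap.adjoint (boundaryT Pair)
      = ContinuousLinearMap.adjoint (boundaryT Pair) := by
    have hdec : ContinuousLinearMap.adjoint (boundaryT Pair)
        = ∑ p ∈ Finset.range (n + 1),
            ContinuousLinearMap.adjoint (boundaryT Pair) ∘L Pair.Pr p := by
      conv_lhs => rw [← ContinuousLinearMap.comp_id
        (ContinuousLinearMap.adjoint (boundaryT Pair)), ← Pair.Pr_total,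
        ContinuousLinearMap.comp_finset_sum]
    conv_lhs => rw [hdec]
    conv_rhs => rw [hdec]
    rw [ContinuousLinearMap.comp_finset_sum]
    refine Finset.sum_congr rfl fun p hp => ?_
    have hp' : p ≤ n := by have := Finset.mem_range.mp hp; omega
    rw [part1 Pair p hp']
    ext x
    simp only [ContinuousLinearMap.comp_apply, ContinuousLinearMap.smul_apply, map_smul]
    congr 1
    have := DFunLike.congr_fun (part2a Pair) (Pair.Pr p x)
    simpa using this
  have h2 := congrArg ContinuousLinearMap.adjoint h1
  rwa [ContinuousLinearMap.adjoint_comp, ContinuousLinearMap.adjoint_adjoint,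
    Pair.Q_selfAdjoint.adjoint_eq] at h2

/-- Part (3). -/
lemma part3 (p : ℕ) (hp : p ≤ n) :
    ((((boundaryT Pair) ∘L ContinuousLinearMap.adjoint Pair.b)
        + ((-1 : ℂ) ^ p) • (Pair.b ∘L boundaryT Pair)) ∘L Pair.Pr p) ∘L Pair.Q = 0 := by
  have hz : (((boundaryT Pair) ∘L ContinuousLinearMap.adjoint Pair.b)
      + ((-1 : ℂ) ^ p) • (Pair.b ∘L boundaryT Pair)) ∘L Pair.Pr p = 0 := by
    ext x
    simp only [ContinuousLinearMap.comp_apply, ContinuousLinearMap.add_apply,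
      ContinuousLinearMap.smul_apply, ContinuousLinearMap.zero_apply]
    rcases lt_or_eq_of_le hp with h | h
    · -- p < n
      have e1 : boundaryT Pair (ContinuousLinearMap.adjoint Pair.b (Pair.Pr p x))
          = ((-1 : ℂ) ^ (p + 1))
              • Pair.b (Pair.T (ContinuousLinearMap.adjoint Pair.b (Pair.Pr p x))) := by
        rw [pb' Pair p x, pT0 Pair (p + 1) h (ContinuousLinearMap.adjoint Pair.b x),
          ← pb' Pair p x, pbb', map_zero, zero_add]
      have e2 : Pair.b (boundaryT Pair (Pair.Pr p x))
          = Pair.b (Pair.T (ContinuousLinearMap.adjoint Pair.b (Pair.Pr p x))) := by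
        rw [pT0 Pair p hp x, map_add, map_smul, pbb, smul_zero, add_zero]
      rw [e1, e2, pow_succ, mul_neg_one, neg_smul, neg_add_cancel]
    · -- p = n
      subst h
      have hb0 : ContinuousLinearMap.adjoint Pair.b (Pair.Pr p x) = 0 := by
        rw [pb' Pair p x, pPr_top]
      rw [hb0, map_zero, zero_add, pT0 Pair p le_rfl x, map_add, map_smul, pbb, smul_zero,
        add_zero, hb0, map_zero, map_zero, smul_zero]
  rw [hz, ContinuousLinearMap.zero_comp]

end HilbertPoincarePairAux

/-- The operator `T₀` of a Poincaré pair satisfies: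
(1) the symmetry `T₀* = (-1)^{(n-p)p} T₀` on `E_p`; (2) `T₀ = P T₀ = T₀ P`;
(3) `T₀ b* + (-1)^p b T₀ = 0` on `P E_p`. -/
theorem statement12 {n : ℕ} {H : Type*} [NormedAddCommGroup H] [InnerProductSpace ℂ H]
    [CompleteSpace H] (Pair : HilbertPoincarePair n H) :
    (∀ p, p ≤ n →
      (ContinuousLinearMap.adjoint (boundaryT Pair)) ∘L Pair.Pr p
        = ((-1 : ℂ) ^ ((n - p) * p)) • ((boundaryT Pair) ∘L Pair.Pr p)) ∧
    (Pair.Q ∘L boundaryT Pair = boundaryT Pair ∧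
      (boundaryT Pair) ∘L Pair.Q = boundaryT Pair) ∧
    (∀ p, p ≤ n →
      ((((boundaryT Pair) ∘L ContinuousLinearMap.adjoint Pair.b)
          + ((-1 : ℂ) ^ p) • (Pair.b ∘L boundaryT Pair)) ∘L Pair.Pr p) ∘L Pair.Q = 0) := by
  exact ⟨fun p hp => HilbertPoincarePairAux.part1 Pair p hp,
    ⟨HilbertPoincarePairAux.part2a Pair, HilbertPoincarePairAux.part2b Pair⟩,
    fun p hp => HilbertPoincarePairAux.part3 Pair p hp⟩
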